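/- Under the setting of steepest descent on exponential loss over linearly separable data (i.e., there exists v with ⟨v, x_n⟩ > 0 for all n), if ‖∇L(w_t)‖_* → 0 along the iterates, then L(w_t) → 0 and ‖w_t‖ → ∞. -/

import Mathlib

/-!
Let `v` separate the data with margin `c = minₙ ⟨v, xₙ⟩ > 0`. Then
`c L(w) ≤ ⟨v, -∇L(w)⟩ ≤ ‖∇L(w)‖_* ‖v‖`, so `L(w_t) → 0`. Each term `exp (-⟨w_t, xₙ⟩)` is at most
`L(w_t)`, hence `⟨w_t, xₙ⟩ → ∞`; since on `ℝ^d` every linear functional is bounded by a multiple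
of any norm, `‖w_t‖ → ∞`.
-/

open Filter Topology Finset
open scoped RealInnerProductSpace BigOperators

noncomputable section

abbrev Euc (d : ℕ) := EuclideanSpace ℝ (Fin d)

/-- `N` is a norm on `ℝ^d`. -/
def IsNorm {d : ℕ} (N : Euc d → ℝ) : Prop :=
  (∀ v, N v = 0 ↔ v = 0) ∧ (∀ (c : ℝ) (v), N (c • v) = |c| * N v) ∧
  (∀ v w, N (v + w) ≤ N v + N w)

/-- Dual norm `‖y‖_* = sup_{‖v‖ ≤ 1} ⟨y, v⟩`. -/
def dualNorm {d : ℕ} (N : Euc d → ℝ) (y : Euc d) : ℝ :=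
  sSup {s | ∃ v, N v ≤ 1 ∧ s = ⟪y, v⟫}

/-- Exponential-loss empirical objective `L(w) = ∑ n exp(-⟨w, x_n⟩)`. -/
def expLoss {d N : ℕ} (x : Fin N → Euc d) (u : Euc d) : ℝ :=
  ∑ n, Real.exp (-⟪u, x n⟫)

/-- Negative gradient of the exponential loss: `-∇L(w) = ∑ n exp(-⟨w,x_n⟩) x_n`. -/
def negGrad {d N : ℕ} (x : Fin N → Euc d) (u : Euc d) : Euc d :=
  ∑ n, Real.exp (-⟪u, x n⟫) • x n

namespace IsNorm

variable {d : ℕ} {Nrm : Euc d → ℝ}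

lemma map_zero (h : IsNorm Nrm) : Nrm 0 = 0 := (h.1 0).2 rfl

lemma map_neg (h : IsNorm Nrm) (u : Euc d) : Nrm (-u) = Nrm u := by
  simpa using h.2.1 (-1) u

lemma map_smul_of_nonneg (h : IsNorm Nrm) {c : ℝ} (hc : 0 ≤ c) (u : Euc d) :
    Nrm (c • u) = c * Nrm u := by
  rw [h.2.1, abs_of_nonneg hc]

lemma nonneg (h : IsNorm Nrm) (u : Euc d) : 0 ≤ Nrm u := by
  have := h.2.2 u (-u)
  rw [add_neg_cancel, h.map_zero, h.map_neg] at this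
  linarith

lemma pos (h : IsNorm Nrm) {u : Euc d} (hu : u ≠ 0) : 0 < Nrm u :=
  (h.nonneg u).lt_of_ne fun h0 => hu ((h.1 u).1 h0.symm)

lemma convexOn (h : IsNorm Nrm) : ConvexOn ℝ Set.univ Nrm := by
  refine ⟨convex_univ, fun u _ v _ a b ha hb _ => ?_⟩
  calc Nrm (a • u + b • v) ≤ Nrm (a • u) + Nrm (b • v) := h.2.2 _ _
    _ = a • Nrm u + b • Nrm v := by
      rw [h.map_smul_of_nonneg ha, h.map_smul_of_nonneg hb, smul_eq_mul, smul_eq_mul]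

lemma continuous (h : IsNorm Nrm) : Continuous Nrm :=
  h.convexOn.locallyLipschitz.continuous

/-- `m` bounds `Nrm` from below on the compact Euclidean unit sphere. -/
lemma exists_pos_mul_norm_le (h : IsNorm Nrm) : ∃ m, 0 < m ∧ ∀ u, m * ‖u‖ ≤ Nrm u := by
  obtain ⟨m, hm, hmin⟩ := (isCompact_sphere (0 : Euc d) 1).exists_forall_le'
    h.continuous.continuousOn fun u hu => h.pos (ne_zero_of_mem_unit_sphere ⟨u, hu⟩)
  refine ⟨m, hm, fun u => ?_⟩
  rcases eq_or_ne u 0 with rfl | hu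
  · simp [h.map_zero]
  have hnorm : 0 < ‖u‖ := norm_pos_iff.2 hu
  have hsphere : ‖u‖⁻¹ • u ∈ Metric.sphere (0 : Euc d) 1 := by
    simp [norm_smul, hnorm.ne']
  have := hmin _ hsphere
  rw [h.map_smul_of_nonneg (inv_nonneg.2 hnorm.le)] at this
  rwa [le_inv_mul_iff₀ hnorm, mul_comm] at this

lemma exists_inner_le_mul (h : IsNorm Nrm) (y : Euc d) :
    ∃ C, 0 < C ∧ ∀ u, ⟪y, u⟫ ≤ C * Nrm u := by
  obtain ⟨m, hm, hle⟩ := h.exists_pos_mul_norm_le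
  refine ⟨(‖y‖ + 1) / m, by positivity, fun u => ?_⟩
  calc ⟪y, u⟫ ≤ ‖y‖ * ‖u‖ := real_inner_le_norm y u
    _ ≤ (‖y‖ + 1) * ‖u‖ := by gcongr; linarith
    _ = (‖y‖ + 1) / m * (m * ‖u‖) := by field_simp
    _ ≤ (‖y‖ + 1) / m * Nrm u := by gcongr; exact hle u

lemma tendsto_atTop_of_tendsto_inner {ι : Type*} {l : Filter ι} (h : IsNorm Nrm) {w : ι → Euc d}
    {y : Euc d} (hw : Tendsto (fun t => ⟪y, w t⟫) l atTop) :
    Tendsto (fun t => Nrm (w t)) l atTop := by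
  obtain ⟨C, hC, hle⟩ := h.exists_inner_le_mul y
  refine tendsto_atTop_mono (fun t => ?_) (hw.atTop_div_const hC)
  rw [div_le_iff₀ hC, mul_comm]
  exact hle (w t)

lemma inner_le_dualNorm (h : IsNorm Nrm) (y : Euc d) {u : Euc d} (hu : Nrm u ≤ 1) :
    ⟪y, u⟫ ≤ dualNorm Nrm y := by
  obtain ⟨C, hC, hle⟩ := h.exists_inner_le_mul y
  refine le_csSup ⟨C, ?_⟩ ⟨u, hu, rfl⟩
  rintro _ ⟨u', hu', rfl⟩
  calc ⟪y, u'⟫ ≤ C * Nrm u' := hle u'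
    _ ≤ C := mul_le_of_le_one_right hC.le hu'

lemma inner_le_dualNorm_mul (h : IsNorm Nrm) (y u : Euc d) :
    ⟪y, u⟫ ≤ dualNorm Nrm y * Nrm u := by
  rcases eq_or_ne u 0 with rfl | hu
  · simp [h.map_zero]
  have hpos := h.pos hu
  have hunit : Nrm ((Nrm u)⁻¹ • u) ≤ 1 := by
    rw [h.map_smul_of_nonneg (inv_nonneg.2 hpos.le), inv_mul_cancel₀ hpos.ne']
  have := h.inner_le_dualNorm y hunit
  rwa [real_inner_smul_right, inv_mul_le_iff₀ hpos, mul_comm] at this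

end IsNorm

section ExpLoss

variable {d N : ℕ}

lemma expLoss_nonneg (x : Fin N → Euc d) (u : Euc d) : 0 ≤ expLoss x u :=
  sum_nonneg fun _ _ => (Real.exp_pos _).le

lemma mul_expLoss_le_inner_negGrad (x : Fin N → Euc d) {v : Euc d} {c : ℝ}
    (hc : ∀ n, c ≤ ⟪v, x n⟫) (u : Euc d) : c * expLoss x u ≤ ⟪v, negGrad x u⟫ := by
  rw [expLoss, negGrad, mul_sum, inner_sum]
  refine sum_le_sum fun n _ => ?_
  rw [real_inner_smul_right, mul_comm]
  exact mul_le_mul_of_nonneg_left (hc n) (Real.exp_pos _).le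

lemma mul_expLoss_le_dualNorm {Nrm : Euc d → ℝ} (hNrm : IsNorm Nrm) (x : Fin N → Euc d)
    {v : Euc d} {c : ℝ} (hc : ∀ n, c ≤ ⟪v, x n⟫) (u : Euc d) :
    c * expLoss x u ≤ dualNorm Nrm (-(negGrad x u)) * Nrm v := by
  calc c * expLoss x u ≤ ⟪v, negGrad x u⟫ := mul_expLoss_le_inner_negGrad x hc u
    _ = ⟪-(negGrad x u), -v⟫ := by rw [inner_neg_neg, real_inner_comm]
    _ ≤ dualNorm Nrm (-(negGrad x u)) * Nrm (-v) := hNrm.inner_le_dualNorm_mul _ _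
    _ = dualNorm Nrm (-(negGrad x u)) * Nrm v := by rw [hNrm.map_neg]

lemma exp_neg_inner_le_expLoss (x : Fin N → Euc d) (u : Euc d) (n : Fin N) :
    Real.exp (-⟪u, x n⟫) ≤ expLoss x u :=
  single_le_sum (fun i _ => (Real.exp_pos (-⟪u, x i⟫)).le) (mem_univ n)

lemma tendsto_inner_atTop_of_tendsto_expLoss {ι : Type*} {l : Filter ι} (x : Fin N → Euc d)
    {w : ι → Euc d} (hw : Tendsto (fun t => expLoss x (w t)) l (𝓝 0)) (n : Fin N) :
    Tendsto (fun t => ⟪w t, x n⟫) l atTop := by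
  have hexp : Tendsto (fun t => Real.exp (-⟪w t, x n⟫)) l (𝓝 0) :=
    squeeze_zero (fun t => (Real.exp_pos _).le) (fun t => exp_neg_inner_le_expLoss x (w t) n) hw
  simpa using Real.tendsto_exp_comp_nhds_zero.1 hexp

end ExpLoss

/-- on linearly separable data, if `‖∇L(w_t)‖_* → 0` then `L(w_t) → 0`
and `‖w_t‖ → ∞`. -/
theorem loss_to_zero_norm_to_infty {d N : ℕ} [NeZero N] (Nrm : Euc d → ℝ)
    (hNrm : IsNorm Nrm) (x : Fin N → Euc d)
    (v : Euc d) (hsep : ∀ n, 0 < ⟪v, x n⟫) (w : ℕ → Euc d)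
    (hgrad : Tendsto (fun t => dualNorm Nrm (-(negGrad x (w t)))) atTop (𝓝 0)) :
    Tendsto (fun t => expLoss x (w t)) atTop (𝓝 0) ∧
      Tendsto (fun t => Nrm (w t)) atTop atTop := by
  obtain ⟨n₀, hn₀⟩ := Finite.exists_min fun n => ⟪v, x n⟫
  have hc : 0 < ⟪v, x n₀⟫ := hsep n₀
  have hloss : Tendsto (fun t => expLoss x (w t)) atTop (𝓝 0) := by
    have hbound : ∀ t, expLoss x (w t) ≤ dualNorm Nrm (-(negGrad x (w t))) * Nrm v / ⟪v, x n₀⟫ :=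
      fun t => by
        rw [le_div_iff₀ hc, mul_comm]
        exact mul_expLoss_le_dualNorm hNrm x hn₀ (w t)
    refine squeeze_zero (fun t => expLoss_nonneg x (w t)) hbound ?_
    simpa using (hgrad.mul_const (Nrm v)).div_const ⟪v, x n₀⟫
  refine ⟨hloss, hNrm.tendsto_atTop_of_tendsto_inner (y := x n₀) ?_⟩
  simpa only [real_inner_comm] using tendsto_inner_atTop_of_tendsto_expLoss x hloss n₀

end
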